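/- arXiv:2102.00314 — 5 statements merged into one kernel-verified Lean document; each statement's English description precedes it below -/
import Mathlib

section
/- For every ψ : {0,1}^d → {0,1}, the function f_ψ is 1-Lipschitz on [0,1]^d (with respect to the Euclidean metric), takes values in [0, 1/4] (in particular in [0,1]), and satisfies f_ψ(x) = ψ(z)/4 for every z ∈ {0,1}^d and every x ∈ A_z. -/
/-!
Two distinct corners `z ≠ z'` differ by `1` in some coordinate, while `A_z` and `A_z'` stay
within `1/4` of them there, so `A_z` and `A_z'` are at distance at least `1/2`. Hence the supports
`{dist(·, A_z) < 1/4}` of the bumps `h_z` are pairwise disjoint, and at each point `f_ψ` is a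
single term `ψ(z) h_z`. A sum of nonnegative `1`-Lipschitz functions with disjoint supports is
`1`-Lipschitz.
-/

open MeasureTheory

noncomputable section

/-- Boolean bit as a real number. -/
def bR (b : Bool) : ℝ := if b then 1 else 0

/-- The unit cube `[0,1]^d` inside Euclidean space. -/
def cube (d : ℕ) : Set (EuclideanSpace ℝ (Fin d)) := {x | ∀ i, x i ∈ Set.Icc (0:ℝ) 1}

/-- `A_z = {x ∈ [0,1]^d : |x_i − z_i| ≤ 1/4 for all i}`. -/
def Az {d : ℕ} (z : Fin d → Bool) : Set (EuclideanSpace ℝ (Fin d)) :=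
  {x | ∀ i, x i ∈ Set.Icc (0:ℝ) 1 ∧ |x i - bR (z i)| ≤ 1/4}

/-- `h_z(x) = max(0, 1/4 − dist(x, A_z))`, Euclidean distance to the set `A_z`. -/
def hzf {d : ℕ} (z : Fin d → Bool) (x : EuclideanSpace ℝ (Fin d)) : ℝ :=
  max 0 (1/4 - Metric.infDist x (Az z))

/-- `f_ψ(x) = Σ_{z ∈ {0,1}^d} ψ(z) · h_z(x)`. -/
def fpsi {d : ℕ} (ψ : (Fin d → Bool) → Bool) (x : EuclideanSpace ℝ (Fin d)) : ℝ :=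
  ∑ z : Fin d → Bool, bR (ψ z) * hzf z x

open Metric Function

section DisjointSupport

variable {ι X M : Type*} [Fintype ι]

theorem exists_sum_apply_eq_of_pairwise_disjoint_support [Nonempty ι] [AddCommMonoid M]
    {f : ι → X → M} (hd : Pairwise (Disjoint on fun i => support (f i))) (x : X) :
    ∃ i, ∑ j, f j x = f i x := by
  by_cases h : ∃ i, f i x ≠ 0
  · obtain ⟨i, hi⟩ := h
    refine ⟨i, Finset.sum_eq_single i (fun j _ hji => ?_) (by simp)⟩
    exact notMem_support.mp (Set.disjoint_left.mp (hd hji.symm) hi)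
  · push Not at h
    exact ⟨Classical.arbitrary ι, by simp [h]⟩

theorem LipschitzWith.sum_of_pairwise_disjoint_support [Nonempty ι] [PseudoMetricSpace X]
    {f : ι → X → ℝ} {K : NNReal} (hf : ∀ i, LipschitzWith K (f i)) (hf0 : ∀ i x, 0 ≤ f i x)
    (hd : Pairwise (Disjoint on fun i => support (f i))) :
    LipschitzWith K fun x => ∑ i, f i x := by
  refine LipschitzWith.of_le_add_mul K fun x y => ?_
  obtain ⟨i, hi⟩ := exists_sum_apply_eq_of_pairwise_disjoint_support hd x
  calc ∑ j, f j x = f i x := hi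
    _ ≤ f i y + K * dist x y := (hf i).le_add_mul x y
    _ ≤ ∑ j, f j y + K * dist x y := by
      gcongr
      exact Finset.single_le_sum (fun j _ => hf0 j y) (Finset.mem_univ i)

end DisjointSupport

section InfDist

variable {X : Type*} [PseudoMetricSpace X]

theorem Metric.le_infDist_add_infDist {s t : Set X} {r : ℝ} (hs : s.Nonempty) (ht : t.Nonempty)
    (hst : ∀ y ∈ s, ∀ w ∈ t, r ≤ dist y w) (x : X) : r ≤ infDist x s + infDist x t := by
  have : r - infDist x t ≤ infDist x s := (le_infDist hs).2 fun y hy => by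
    have hy_t : r ≤ infDist y t := (le_infDist ht).2 (hst y hy)
    have := infDist_le_infDist_add_dist (x := y) (y := x) (s := t)
    rw [dist_comm] at this
    linarith
  linarith

theorem lipschitzWith_max_zero_sub_infDist (s : Set X) (r : ℝ) :
    LipschitzWith 1 fun x => max 0 (r - infDist x s) := by
  simpa using ((LipschitzWith.const r).sub (lipschitz_infDist_pt (s := s))).const_max 0

theorem support_max_zero_sub_infDist (s : Set X) (r : ℝ) :
    support (fun x => max 0 (r - infDist x s)) = {x | infDist x s < r} := by
  ext x
  simp

end InfDist

theorem bR_nonneg (b : Bool) : 0 ≤ bR b := by cases b <;> simp [bR]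

theorem bR_le_one (b : Bool) : bR b ≤ 1 := by cases b <;> simp [bR]

theorem abs_bR_sub_bR_of_ne {a b : Bool} (h : a ≠ b) : |bR a - bR b| = 1 := by
  cases a <;> cases b <;> simp_all [bR]

section Corners

variable {d : ℕ}

theorem Az_nonempty (z : Fin d → Bool) : (Az z).Nonempty :=
  ⟨WithLp.toLp 2 fun i => bR (z i), fun i => ⟨⟨bR_nonneg _, bR_le_one _⟩, by simp⟩⟩

theorem half_le_dist_of_mem_Az {z z' : Fin d → Bool} (h : z ≠ z') {y w : EuclideanSpace ℝ (Fin d)}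
    (hy : y ∈ Az z) (hw : w ∈ Az z') : 1 / 2 ≤ dist y w := by
  obtain ⟨i, hi⟩ := Function.ne_iff.mp h
  have hyi : |bR (z i) - y i| ≤ 1 / 4 := abs_sub_comm (y i) _ ▸ (hy i).2
  have hwi : |w i - bR (z' i)| ≤ 1 / 4 := (hw i).2
  have hyw : |y i - w i| ≤ dist y w := Real.dist_eq (y i) (w i) ▸ PiLp.dist_apply_le y w i
  have h₁ := abs_sub_le (bR (z i)) (y i) (bR (z' i))
  have h₂ := abs_sub_le (y i) (w i) (bR (z' i))
  rw [abs_bR_sub_bR_of_ne hi] at h₁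
  linarith

theorem lipschitzWith_hzf (z : Fin d → Bool) : LipschitzWith 1 (hzf z) :=
  lipschitzWith_max_zero_sub_infDist (Az z) (1 / 4)

theorem support_hzf (z : Fin d → Bool) : support (hzf z) = {x | infDist x (Az z) < 1 / 4} :=
  support_max_zero_sub_infDist (Az z) (1 / 4)

theorem hzf_nonneg (z : Fin d → Bool) (x : EuclideanSpace ℝ (Fin d)) : 0 ≤ hzf z x :=
  le_max_left _ _

theorem hzf_le (z : Fin d → Bool) (x : EuclideanSpace ℝ (Fin d)) : hzf z x ≤ 1 / 4 :=
  max_le (by norm_num) (by linarith [infDist_nonneg (x := x) (s := Az z)])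

theorem hzf_of_mem {z : Fin d → Bool} {x : EuclideanSpace ℝ (Fin d)} (hx : x ∈ Az z) :
    hzf z x = 1 / 4 := by
  simp [hzf, infDist_zero_of_mem hx]

theorem pairwise_disjoint_support_hzf :
    Pairwise (Disjoint on fun z : Fin d → Bool => support (hzf z)) := by
  intro z z' hne
  have hsep := le_infDist_add_infDist (Az_nonempty z) (Az_nonempty z')
    (fun y hy w hw => half_le_dist_of_mem_Az hne hy hw)
  simp only [onFun, support_hzf]
  refine Set.disjoint_left.2 fun x hx hx' => ?_
  rw [Set.mem_ofPred_eq] at hx hx'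
  linarith [hsep x]

theorem hzf_eq_zero_of_mem_Az {z z' : Fin d → Bool} (hne : z' ≠ z) {x : EuclideanSpace ℝ (Fin d)}
    (hx : x ∈ Az z) : hzf z' x = 0 :=
  notMem_support.mp <| Set.disjoint_left.mp (pairwise_disjoint_support_hzf hne.symm)
    (by simp [hzf_of_mem hx])

theorem lipschitzWith_bR_mul_hzf (b : Bool) (z : Fin d → Bool) :
    LipschitzWith 1 fun x => bR b * hzf z x := by
  cases b
  · simpa [bR] using LipschitzWith.const' (α := EuclideanSpace ℝ (Fin d)) (K := 1) (0 : ℝ)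
  · simpa [bR] using lipschitzWith_hzf z

end Corners

/-- for every `ψ : {0,1}^d → {0,1}`, the function `f_ψ` is `1`-Lipschitz
on `[0,1]^d` (w.r.t. the Euclidean metric), takes values in `[0, 1/4]`, and satisfies
`f_ψ(x) = ψ(z)/4` for every `z ∈ {0,1}^d` and every `x ∈ A_z`. -/
theorem fpsi_lipschitz_range_and_value (d : ℕ) (ψ : (Fin d → Bool) → Bool) :
    LipschitzOnWith 1 (fpsi ψ) (cube d) ∧
    (∀ x ∈ cube d, fpsi ψ x ∈ Set.Icc (0:ℝ) (1/4)) ∧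
    (∀ z : Fin d → Bool, ∀ x ∈ Az z, fpsi ψ x = bR (ψ z) / 4) := by
  have hd : Pairwise (Disjoint on fun z => support fun x => bR (ψ z) * hzf z x) := fun z z' hne =>
    (pairwise_disjoint_support_hzf hne).mono (support_mul_subset_right _ _)
      (support_mul_subset_right _ _)
  have hterm_nonneg z x : 0 ≤ bR (ψ z) * hzf z x := mul_nonneg (bR_nonneg _) (hzf_nonneg z x)
  refine ⟨(LipschitzWith.sum_of_pairwise_disjoint_support (fun z => lipschitzWith_bR_mul_hzf _ z)
    hterm_nonneg hd).lipschitzOnWith, fun x _ => ?_, fun z x hx => ?_⟩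
  · obtain ⟨z, hz⟩ := exists_sum_apply_eq_of_pairwise_disjoint_support hd x
    rw [fpsi, hz]
    exact ⟨hterm_nonneg z x,
      (mul_le_of_le_one_left (hzf_nonneg z x) (bR_le_one _)).trans (hzf_le z x)⟩
  · rw [fpsi, Finset.sum_eq_single z
      (fun z' _ hz' => by rw [hzf_eq_zero_of_mem_Az hz' hx, mul_zero]) (by simp),
      hzf_of_mem hx, mul_one_div]

end
end

section
/- For all ψ, ψ' : {0,1}^d → {0,1}, one has ‖f_ψ − f_{ψ'}‖²_{L2(μ)} = (1/16)·2^{−d}·|{z ∈ {0,1}^d : ψ(z) ≠ ψ'(z)}|. -/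
open MeasureTheory
open scoped ENNReal

noncomputable section

/-- The set `([0,1/4] ∪ [3/4,1])^d`. -/
def Sd (d : ℕ) : Set (EuclideanSpace ℝ (Fin d)) :=
  {x | ∀ i, x i ∈ Set.Icc (0:ℝ) (1/4) ∪ Set.Icc (3/4) 1}

/-- The uniform probability distribution on `([0,1/4] ∪ [3/4,1])^d`
(Lebesgue measure restricted to this set, normalized by its volume `2^{-d}`). -/
def muU (d : ℕ) : Measure (EuclideanSpace ℝ (Fin d)) :=
  (2:ℝ≥0∞) ^ d • volume.restrict (Sd d)

/-! On `([0,1/4] ∪ [3/4,1])^d` the cubes `A_z` form a partition, and two distinct cubes are at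
distance at least `1/2` (they are separated by a gap of width `1/2` in some coordinate). Hence on
`A_z` only `h_z` is nonzero, with value `1/4`, so `(f_ψ - f_ψ')²` is the constant
`[ψ z ≠ ψ' z] / 16` there; each cube has `μ`-mass `2^d · 4^{-d} = 2^{-d}`. -/

open Set Metric Function

namespace FpsiL2

def bitInterval : Bool → Set ℝ
  | false => Icc 0 (1/4)
  | true => Icc (3/4) 1

def bitOf (t : ℝ) : Bool := decide ((3:ℝ)/4 ≤ t)

lemma mem_bitInterval_iff {b : Bool} {t : ℝ} :
    t ∈ bitInterval b ↔ t ∈ Icc (0:ℝ) 1 ∧ |t - bR b| ≤ 1/4 := by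
  cases b <;> simp only [bitInterval, bR, mem_Icc, abs_le] <;> norm_num <;> constructor <;>
    intros <;> constructor <;> first | constructor <;> linarith | linarith

lemma mem_bitInterval_bitOf {t : ℝ} (ht : t ∈ bitInterval false ∪ bitInterval true) :
    t ∈ bitInterval (bitOf t) := by
  rcases ht with ht | ht
  · have : bitOf t = false := by simp only [bitInterval, mem_Icc] at ht; simp [bitOf]; linarith
    rwa [this]
  · have : bitOf t = true := by simp only [bitInterval, mem_Icc] at ht; simp [bitOf]; linarith
    rwa [this]

lemma eq_bitOf_of_mem {b : Bool} {t : ℝ} (ht : t ∈ bitInterval b) : b = bitOf t := by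
  cases b <;> simp only [bitInterval, mem_Icc] at ht <;> simp [bitOf] <;> linarith

lemma half_le_abs_sub_of_mem_bitInterval {b b' : Bool} {s t : ℝ} (hb : b ≠ b')
    (hs : s ∈ bitInterval b) (ht : t ∈ bitInterval b') : 1/2 ≤ |s - t| := by
  cases b <;> cases b' <;> simp only [bitInterval, mem_Icc] at hs ht <;> simp at hb <;>
    [rw [abs_sub_comm]; skip] <;> rw [le_abs] <;> left <;> linarith

lemma volume_bitInterval (b : Bool) : volume (bitInterval b) = ENNReal.ofReal (1/4) := by
  cases b <;> norm_num [bitInterval]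

lemma measurableSet_bitInterval (b : Bool) : MeasurableSet (bitInterval b) := by
  cases b <;> exact measurableSet_Icc

lemma sq_bR_sub_bR (a b : Bool) : (bR a - bR b) ^ 2 = if a ≠ b then 1 else 0 := by
  cases a <;> cases b <;> norm_num [bR]

variable {d : ℕ}

lemma mem_Az_iff {z : Fin d → Bool} {x : EuclideanSpace ℝ (Fin d)} :
    x ∈ Az z ↔ ∀ i, x i ∈ bitInterval (z i) := by
  simp only [Az, mem_ofPred_eq, mem_bitInterval_iff]

lemma Sd_eq_iUnion_Az (d : ℕ) : Sd d = ⋃ z : Fin d → Bool, Az z := by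
  ext x
  simp only [mem_iUnion, mem_Az_iff]
  constructor
  · intro hx
    exact ⟨fun i => bitOf (x i), fun i => mem_bitInterval_bitOf (hx i)⟩
  · rintro ⟨z, hz⟩ i
    have hzi := hz i
    cases h : z i <;> rw [h] at hzi
    · exact .inl hzi
    · exact .inr hzi

lemma pairwise_disjoint_Az : Pairwise (Disjoint on (Az (d := d))) := by
  intro z z' hne
  refine disjoint_left.2 fun x hx hx' => hne (funext fun i => ?_)
  rw [eq_bitOf_of_mem (mem_Az_iff.1 hx i), eq_bitOf_of_mem (mem_Az_iff.1 hx' i)]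

lemma Az_nonempty (z : Fin d → Bool) : (Az z).Nonempty :=
  ⟨WithLp.toLp 2 fun i => bR (z i), mem_Az_iff.2 fun i => by
    cases h : z i <;> norm_num [h, bitInterval, bR]⟩

lemma half_le_infDist_Az {z z' : Fin d → Bool} {x : EuclideanSpace ℝ (Fin d)}
    (hx : x ∈ Az z') (hz : z' ≠ z) : 1/2 ≤ infDist x (Az z) := by
  obtain ⟨i, hi⟩ := Function.ne_iff.1 hz
  refine (le_infDist (Az_nonempty z)).2 fun y hy => ?_
  calc 1/2 ≤ |x i - y i| :=
        half_le_abs_sub_of_mem_bitInterval hi (mem_Az_iff.1 hx i) (mem_Az_iff.1 hy i)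
    _ ≤ dist x y := PiLp.dist_apply_le x y i

lemma hzf_eq_of_mem {z : Fin d → Bool} {x : EuclideanSpace ℝ (Fin d)} (hx : x ∈ Az z) :
    hzf z x = 1/4 := by
  rw [hzf, infDist_zero_of_mem hx]
  norm_num

lemma hzf_eq_zero_of_mem {z z' : Fin d → Bool} {x : EuclideanSpace ℝ (Fin d)}
    (hx : x ∈ Az z') (hz : z' ≠ z) : hzf z x = 0 := by
  have := half_le_infDist_Az hx hz
  rw [hzf, max_eq_left]
  linarith

lemma fpsi_eq_of_mem_Az (ψ : (Fin d → Bool) → Bool) {z : Fin d → Bool}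
    {x : EuclideanSpace ℝ (Fin d)} (hx : x ∈ Az z) : fpsi ψ x = bR (ψ z) / 4 := by
  rw [fpsi, Finset.sum_eq_single z
    (fun z' _ hz' => by rw [hzf_eq_zero_of_mem hx hz'.symm, mul_zero])
    (fun h => absurd (Finset.mem_univ z) h), hzf_eq_of_mem hx]
  ring

lemma Az_eq_preimage (z : Fin d → Bool) :
    Az z = (MeasurableEquiv.toLp 2 (Fin d → ℝ)).symm ⁻¹' univ.pi fun i => bitInterval (z i) := by
  ext x
  simp only [mem_preimage, mem_univ_pi, mem_Az_iff]
  rfl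

lemma measurableSet_Az (z : Fin d → Bool) : MeasurableSet (Az z) := by
  rw [Az_eq_preimage]
  exact (MeasurableEquiv.toLp 2 _).symm.measurable
    (MeasurableSet.univ_pi fun i => measurableSet_bitInterval (z i))

lemma volume_Az (z : Fin d → Bool) : volume (Az z) = ENNReal.ofReal (1/4) ^ d := by
  rw [Az_eq_preimage,
    (EuclideanSpace.volume_preserving_symm_measurableEquiv_toLp (Fin d)).measure_preimage
      (MeasurableSet.univ_pi fun i => measurableSet_bitInterval (z i)).nullMeasurableSet,
    volume_pi_pi]
  simp [volume_bitInterval]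

end FpsiL2

open FpsiL2

/-- for all `ψ, ψ' : {0,1}^d → {0,1}`,
`‖f_ψ − f_{ψ'}‖²_{L2(μ)} = (1/16)·2^{−d}·|{z : ψ(z) ≠ ψ'(z)}|`. -/
theorem fpsi_L2_dist_sq (d : ℕ) (ψ ψ' : (Fin d → Bool) → Bool) :
    ∫ x, (fpsi ψ x - fpsi ψ' x) ^ 2 ∂(muU d)
      = (1/16) * (1/2^d) *
        ((Finset.univ.filter (fun z : Fin d → Bool => ψ z ≠ ψ' z)).card : ℝ) := by
  have eqOn_Az (z : Fin d → Bool) : EqOn (fun x => (fpsi ψ x - fpsi ψ' x) ^ 2)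
      (fun _ => (bR (ψ z) - bR (ψ' z)) ^ 2 / 16) (Az z) := fun x hx => by
    simp only [fpsi_eq_of_mem_Az _ hx]
    ring
  have integrableOn_Az (z : Fin d → Bool) :
      IntegrableOn (fun x => (fpsi ψ x - fpsi ψ' x) ^ 2) (Az z) :=
    (integrableOn_const (by simp [volume_Az])).congr_fun (eqOn_Az z).symm (measurableSet_Az z)
  rw [muU, integral_smul_measure, Sd_eq_iUnion_Az,
    integral_iUnion_fintype measurableSet_Az pairwise_disjoint_Az integrableOn_Az]
  simp only [setIntegral_congr_fun (measurableSet_Az _) (eqOn_Az _), setIntegral_const,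
    Measure.real, volume_Az, sq_bR_sub_bR, smul_eq_mul]
  rw [← Finset.mul_sum, ← Finset.sum_div, Finset.sum_boole, ENNReal.toReal_pow,
    ENNReal.toReal_pow, ENNReal.toReal_ofNat, ENNReal.toReal_ofReal (by norm_num),
    ← mul_assoc, ← mul_pow, show (2:ℝ) * (1/4) = 1/2 by norm_num, one_div_pow]
  ring

end
end

section
/- Let T be a threshold circuit with d inputs, q outputs, depth m and size s. Then there exists a ReLU network N : ℝ^d → ℝ^q of depth m+1 and size 2s+q such that N(x) = T(x) for every x ∈ {0,1}^d, and moreover N(x) ∈ [0,1]^q for every x ∈ ℝ^d. -/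
/-!
On integers, `sign z = relu z - relu (z - 1)`, and for real `t` this difference is `t` clamped
to `[0, 1]`. So each gate with pre-activation `y` is replaced by the two ReLU neurons `relu y`
and `relu (y - 1)`; the linear map taking their difference is absorbed into the affine map of
the following layer, and becomes the output layer after the last gate layer. This doubles the
neurons of every layer and adds one output layer of `q` neurons.
-/

noncomputable section

/-- The ReLU activation. -/
def relu (t : ℝ) : ℝ := max 0 t

/-- A feedforward neural network from `ℝ^n` to `ℝ^q`, given as a sequence of affine
layers; the activation is applied coordinatewise after every affine layer except the
last one. -/
inductive Net : ℕ → ℕ → Type where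
  | last {n q : ℕ} (A : Fin q → Fin n → ℝ) (b : Fin q → ℝ) : Net n q
  | layer {n m q : ℕ} (A : Fin m → Fin n → ℝ) (b : Fin m → ℝ) (rest : Net m q) : Net n q

/-- Evaluation of a network with activation `σ`. -/
def Net.eval (σ : ℝ → ℝ) : {n q : ℕ} → Net n q → (Fin n → ℝ) → Fin q → ℝ
  | _, _, .last A b, x, i => (∑ j, A i j * x j) + b i
  | _, _, .layer A b rest, x, i => rest.eval σ (fun m => σ ((∑ j, A m j * x j) + b m)) i

/-- The size of a network: the total number of neurons, i.e. the sum of the output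
dimensions of all affine layers. -/
def Net.size : {n q : ℕ} → Net n q → ℕ
  | _, q, .last _ _ => q
  | _, _, .layer (m := m) _ _ rest => m + rest.size

/-- The depth of a network: its number of layers. -/
def Net.depth : {n q : ℕ} → Net n q → ℕ
  | _, _, .last _ _ => 1
  | _, _, .layer _ _ rest => 1 + rest.depth

/-- `sign(t) = 1` if `t > 0` and `0` otherwise. -/
def isgn (z : ℤ) : ℤ := if 0 < z then 1 else 0

/-- A (layered) threshold circuit from `{0,1}^n` to `{0,1}^q`: every gate, including
the output gates, computes a linear threshold function with integer weights. -/
inductive ThrCirc : ℕ → ℕ → Type where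
  | last {n q : ℕ} (A : Fin q → Fin n → ℤ) (b : Fin q → ℤ) : ThrCirc n q
  | layer {n m q : ℕ} (A : Fin m → Fin n → ℤ) (b : Fin m → ℤ) (rest : ThrCirc m q) : ThrCirc n q

/-- Evaluation of a threshold circuit (the `sign` activation is applied at every gate,
including the output gates). -/
def ThrCirc.eval : {n q : ℕ} → ThrCirc n q → (Fin n → ℤ) → Fin q → ℤ
  | _, _, .last A b, x, i => isgn ((∑ j, A i j * x j) + b i)
  | _, _, .layer A b rest, x, i => rest.eval (fun m => isgn ((∑ j, A m j * x j) + b m)) i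

/-- Size of a threshold circuit: its number of gates. -/
def ThrCirc.size : {n q : ℕ} → ThrCirc n q → ℕ
  | _, q, .last _ _ => q
  | _, _, .layer (m := m) _ _ rest => m + rest.size

/-- Depth of a threshold circuit: its number of layers. -/
def ThrCirc.depth : {n q : ℕ} → ThrCirc n q → ℕ
  | _, _, .last _ _ => 1
  | _, _, .layer _ _ rest => 1 + rest.depth

open Matrix

theorem relu_sub_relu_sub_one_intCast (z : ℤ) : relu z - relu (z - 1) = isgn z := by
  rcases le_or_gt z 0 with hz | hz
  · have hz' : (z : ℝ) ≤ 0 := by exact_mod_cast hz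
    simp [relu, isgn, hz.not_gt, hz', hz'.trans zero_le_one]
  · have hz' : (1 : ℝ) ≤ z := by exact_mod_cast hz
    simp [relu, isgn, hz, hz', zero_le_one.trans hz']

theorem relu_sub_relu_sub_one_mem_Icc (t : ℝ) : relu t - relu (t - 1) ∈ Set.Icc 0 1 := by
  simp only [relu, Set.mem_Icc]
  constructor
  · exact sub_nonneg.mpr (max_le_max_left 0 (by linarith))
  · rcases le_total t 0 with h | h
    · rw [max_eq_left h, max_eq_left (by linarith)]; norm_num
    · rw [max_eq_right h]; linarith [le_max_right 0 (t - 1)]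

namespace Net

variable {n k q : ℕ}

theorem eval_last (σ : ℝ → ℝ) (A : Matrix (Fin q) (Fin n) ℝ) (b : Fin q → ℝ)
    (x : Fin n → ℝ) : (Net.last A b).eval σ x = A *ᵥ x + b :=
  rfl

theorem eval_layer (σ : ℝ → ℝ) (A : Fin k → Fin n → ℝ) (b : Fin k → ℝ) (rest : Net k q)
    (x : Fin n → ℝ) :
    (Net.layer A b rest).eval σ x = rest.eval σ fun j => σ ((A *ᵥ x + b) j) :=
  rfl

-- `(M ·)` rather than `M`: `Fin.append` should see a function, not a `Matrix`, or the
-- `Fin.append_left` rewrites below fail to unify.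
def pairLayer (M : Matrix (Fin k) (Fin n) ℝ) (c : Fin k → ℝ) (rest : Net (k + k) q) :
    Net n q :=
  .layer (Fin.append (M ·) (M ·)) (Fin.append c (c - 1)) rest

theorem eval_pairLayer (M : Matrix (Fin k) (Fin n) ℝ) (c : Fin k → ℝ) (rest : Net (k + k) q)
    (x : Fin n → ℝ) :
    (pairLayer M c rest).eval relu x =
      rest.eval relu (Fin.append (fun i => relu ((M *ᵥ x + c) i))
        (fun i => relu ((M *ᵥ x + c) i - 1))) := by
  rw [pairLayer, eval_layer]
  congr 1
  ext j
  refine Fin.addCases (fun i => ?_) (fun i => ?_) j <;>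
    simp only [Pi.add_apply, Pi.sub_apply, Pi.one_apply, mulVec, Fin.append_left, Fin.append_right,
      add_sub_assoc]

end Net

def diffMatrix (k : ℕ) : Matrix (Fin k) (Fin (k + k)) ℝ :=
  of fun i => Fin.append (Pi.single i 1) (Pi.single i (-1))

theorem diffMatrix_mulVec_append {k : ℕ} (u v : Fin k → ℝ) :
    diffMatrix k *ᵥ Fin.append u v = u - v := by
  ext i
  simp only [diffMatrix, mulVec, of_apply, dotProduct, Fin.sum_univ_add, Fin.append_left,
    Fin.append_right]
  simp [Pi.single_apply, sub_eq_add_neg]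

namespace ThrCirc

variable {n p k q : ℕ}

theorem eval_last (A : Fin q → Fin p → ℤ) (b : Fin q → ℤ) (z : Fin p → ℤ) :
    (ThrCirc.last A b).eval z = fun i => isgn ((of A *ᵥ z + b) i) :=
  rfl

theorem eval_layer (A : Fin k → Fin p → ℤ) (b : Fin k → ℤ) (rest : ThrCirc k q)
    (z : Fin p → ℤ) :
    (ThrCirc.layer A b rest).eval z = rest.eval fun i => isgn ((of A *ᵥ z + b) i) :=
  rfl

/-- The ReLU network computing `T ∘ P` on the inputs `x` for which `P *ᵥ x` is integral
(see `eval_toNet`). -/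
def toNet : {n p q : ℕ} → Matrix (Fin p) (Fin n) ℝ → ThrCirc p q → Net n q
  | _, _, _, P, .last A b =>
      .pairLayer ((of A).map (Int.cast : ℤ → ℝ) * P) (Int.cast ∘ b) (.last (diffMatrix _) 0)
  | _, _, _, P, .layer A b rest =>
      .pairLayer ((of A).map (Int.cast : ℤ → ℝ) * P) (Int.cast ∘ b)
        (rest.toNet (diffMatrix _))

theorem depth_toNet (P : Matrix (Fin p) (Fin n) ℝ) (T : ThrCirc p q) :
    (T.toNet P).depth = T.depth + 1 := by
  induction T generalizing n with
  | last A b => rfl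
  | layer A b rest ih => simp only [toNet, Net.pairLayer, Net.depth, ThrCirc.depth, ih]; omega

theorem size_toNet (P : Matrix (Fin p) (Fin n) ℝ) (T : ThrCirc p q) :
    (T.toNet P).size = 2 * T.size + q := by
  induction T generalizing n with
  | last A b => simp only [toNet, Net.pairLayer, Net.size, ThrCirc.size]; ring
  | layer A b rest ih => simp only [toNet, Net.pairLayer, Net.size, ThrCirc.size, ih]; ring

theorem map_intCast_mul_mulVec_add {A : Matrix (Fin k) (Fin p) ℤ} {P : Matrix (Fin p) (Fin n) ℝ}
    {x : Fin n → ℝ} {z : Fin p → ℤ} (hz : P *ᵥ x = Int.cast ∘ z) (b : Fin k → ℤ) :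
    (A.map (Int.cast : ℤ → ℝ) * P) *ᵥ x + Int.cast ∘ b = Int.cast ∘ (A *ᵥ z + b) := by
  rw [← mulVec_mulVec, hz]
  ext i
  simpa using (RingHom.map_mulVec (Int.castRingHom ℝ) A z i).symm

theorem eval_toNet (P : Matrix (Fin p) (Fin n) ℝ) (T : ThrCirc p q) {x : Fin n → ℝ}
    {z : Fin p → ℤ} (hz : P *ᵥ x = Int.cast ∘ z) :
    (T.toNet P).eval relu x = Int.cast ∘ T.eval z := by
  induction T generalizing n with
  | last A b =>
    rw [toNet, Net.eval_pairLayer, Net.eval_last, diffMatrix_mulVec_append, add_zero,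
      map_intCast_mul_mulVec_add hz, eval_last]
    ext i
    exact relu_sub_relu_sub_one_intCast _
  | layer A b rest ih =>
    rw [toNet, Net.eval_pairLayer, eval_layer, map_intCast_mul_mulVec_add hz]
    apply ih
    rw [diffMatrix_mulVec_append]
    ext i
    exact relu_sub_relu_sub_one_intCast _

theorem eval_toNet_mem_Icc (P : Matrix (Fin p) (Fin n) ℝ) (T : ThrCirc p q) (x : Fin n → ℝ)
    (i : Fin q) : (T.toNet P).eval relu x i ∈ Set.Icc 0 1 := by
  induction T generalizing n with
  | last A b =>
    rw [toNet, Net.eval_pairLayer, Net.eval_last, diffMatrix_mulVec_append, add_zero]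
    exact relu_sub_relu_sub_one_mem_Icc _
  | layer A b rest ih =>
    rw [toNet, Net.eval_pairLayer]
    exact ih _ _ i

end ThrCirc

/-- for every threshold circuit `T` with `d` inputs, `q` outputs, depth `m`
and size `s`, there is a ReLU network `N : ℝ^d → ℝ^q` of depth `m+1` and size `2s+q`
such that `N(x) = T(x)` for every `x ∈ {0,1}^d`, and moreover `N(x) ∈ [0,1]^q` for
every `x ∈ ℝ^d`. -/
theorem tc_to_relu_net (d q m s : ℕ) (T : ThrCirc d q) (hdepth : T.depth = m) (hsize : T.size = s) :
    ∃ N : Net d q, N.depth = m + 1 ∧ N.size = 2 * s + q ∧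
      (∀ x : Fin d → Bool, ∀ i : Fin q,
        N.eval relu (fun j => if x j then 1 else 0) i
          = ((T.eval (fun j => if x j then 1 else 0) i : ℤ) : ℝ)) ∧
      (∀ x : Fin d → ℝ, ∀ i : Fin q, N.eval relu x i ∈ Set.Icc (0:ℝ) 1) := by
  refine ⟨T.toNet 1, by rw [T.depth_toNet, hdepth], by rw [T.size_toNet, hsize], fun x i => ?_,
    T.eval_toNet_mem_Icc 1⟩
  have hx : (1 : Matrix (Fin d) (Fin d) ℝ) *ᵥ (fun j => if x j then 1 else 0) =
      Int.cast ∘ fun j => if x j then 1 else 0 := by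
    ext j
    simp [apply_ite (Int.cast : ℤ → ℝ)]
  rw [T.eval_toNet 1 hx, Function.comp_apply]

end
end

section
/- Let A, B ⊆ {0,1}^d be such that Σ_{i=1}^d a_i b_i is odd for every a ∈ A and every b ∈ B. Then |A| · |B| ≤ 2^d. (Equivalently, every 1-monochromatic rectangle of the communication matrix of the inner product function IP_d has at most 2^d entries.) -/
/-!
The Walsh–Hadamard matrix `H a b = (-1) ^ ⟨a, b⟩` has orthogonal rows of squared length `2 ^ d`,
so its column sums `s b = ∑_{a ∈ A} H a b` satisfy `∑_b s b ^ 2 = |A| 2 ^ d` (Parseval). On a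
1-monochromatic rectangle `s b = -|A|` for every `b ∈ B`; keeping only the columns in `B` gives
`|A| ^ 2 |B| ≤ |A| 2 ^ d`.
-/

open Finset

section Orthogonal

variable {α β : Type*} [DecidableEq α] [Fintype β] (M : α → β → ℤ) {N : ℤ}

theorem sum_sq_sum_eq_card_mul
    (horth : ∀ a a', ∑ b, M a b * M a' b = if a = a' then N else 0) (A : Finset α) :
    ∑ b, (∑ a ∈ A, M a b) ^ 2 = #A * N := by
  calc ∑ b, (∑ a ∈ A, M a b) ^ 2
      = ∑ b, ∑ a ∈ A, ∑ a' ∈ A, M a b * M a' b := by simp only [sq, sum_mul_sum]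
    _ = ∑ a ∈ A, ∑ a' ∈ A, ∑ b, M a b * M a' b := by
        rw [sum_comm]
        exact sum_congr rfl fun _ _ => sum_comm
    _ = #A * N := by simp [horth]

theorem card_mul_card_mul_sq_le
    (horth : ∀ a a', ∑ b, M a b * M a' b = if a = a' then N else 0)
    {A : Finset α} {B : Finset β} (hA : A.Nonempty) {c : ℤ}
    (hAB : ∀ a ∈ A, ∀ b ∈ B, M a b = c) :
    #A * #B * c ^ 2 ≤ N := by
  have key : (#A : ℤ) * (#A * #B * c ^ 2) ≤ #A * N :=
    calc (#A : ℤ) * (#A * #B * c ^ 2) = ∑ b ∈ B, (∑ a ∈ A, M a b) ^ 2 := by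
          rw [sum_congr rfl fun b hb => by rw [sum_congr rfl fun a ha => hAB a ha b hb]]
          simp only [sum_const, nsmul_eq_mul]
          ring
      _ ≤ ∑ b, (∑ a ∈ A, M a b) ^ 2 :=
          sum_le_sum_of_subset_of_nonneg (subset_univ B) fun _ _ _ => sq_nonneg _
      _ = #A * N := sum_sq_sum_eq_card_mul M horth A
  exact le_of_mul_le_mul_left key (by exact_mod_cast hA.card_pos)

end Orthogonal

section Hadamard

variable {ι : Type*} [Fintype ι]

def hadamardSign (a b : ι → Bool) : ℤ := ∏ i, if a i && b i then -1 else 1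

theorem hadamardSign_eq_neg_one_pow (a b : ι → Bool) :
    hadamardSign a b = (-1) ^ (∑ i, (if a i then 1 else 0) * (if b i then 1 else 0) : ℕ) := by
  rw [hadamardSign, ← prod_pow_eq_pow_sum]
  refine prod_congr rfl fun i _ => ?_
  cases a i <;> cases b i <;> simp

theorem sum_hadamardSign_mul [DecidableEq ι] (a a' : ι → Bool) :
    ∑ b, hadamardSign a b * hadamardSign a' b = if a = a' then 2 ^ Fintype.card ι else 0 := by
  simp only [hadamardSign, ← prod_mul_distrib]
  rw [← Fintype.prod_sum fun i c =>
    (if a i && c then (-1 : ℤ) else 1) * (if a' i && c then -1 else 1)]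
  have coord : ∀ i, ∑ c : Bool, (if a i && c then (-1 : ℤ) else 1) * (if a' i && c then -1 else 1)
      = if a i = a' i then 2 else 0 := fun i => by
    cases a i <;> cases a' i <;> simp
  simp only [coord]
  split_ifs with haa'
  · simp [haa']
  · obtain ⟨i, hi⟩ := Function.ne_iff.mp haa'
    exact prod_eq_zero (mem_univ i) (if_neg hi)

end Hadamard

/-- let `A, B ⊆ {0,1}^d` be such that `Σ_i a_i b_i` is odd for every
`a ∈ A` and every `b ∈ B`. Then `|A| · |B| ≤ 2^d`. (Every 1-monochromatic rectangle of
the communication matrix of the inner product function has at most `2^d` entries.) -/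
theorem ip_one_monochromatic_rectangle_bound (d : ℕ) (A B : Finset (Fin d → Bool))
    (h : ∀ a ∈ A, ∀ b ∈ B,
      Odd (∑ i, (if a i then 1 else 0) * (if b i then 1 else 0) : ℕ)) :
    A.card * B.card ≤ 2 ^ d := by
  rcases A.eq_empty_or_nonempty with rfl | hA
  · simp
  have hsign : ∀ a ∈ A, ∀ b ∈ B, hadamardSign a b = -1 := fun a ha b hb => by
    rw [hadamardSign_eq_neg_one_pow, (h a ha b hb).neg_one_pow]
  have := card_mul_card_mul_sq_le hadamardSign sum_hadamardSign_mul hA hsign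
  simp only [Fintype.card_fin, even_two, Even.neg_pow, one_pow, mul_one] at this
  exact_mod_cast this
end

section
/- For all x, y ∈ {0,1}^d, writing s = Σ_{i=1}^d max(0, x_i + y_i − 1): IP_d(x,y) = Σ_{k=1}^d (−1)^{k−1}·( max(0, s − k + 1) − max(0, s − k) ). In particular, IP_d is computed exactly on Boolean inputs by a ReLU network of depth 3 and size at most 3d + 1. -/
noncomputable section

/-- The inner product function `IP_d(x,y) = Σ_i x_i y_i mod 2 ∈ {0,1}`. -/
def IPn (d : ℕ) (x y : Fin d → Bool) : ℕ :=
  (∑ i, (if x i then 1 else 0) * (if y i then 1 else 0)) % 2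

/-! The network counts the coordinates where `x` and `y` are both `1`: the first layer computes
the conjunctions `relu (x_i + y_i - 1)`, the second layer the ramps `relu (m - k)` of their
sum `m`, and the output layer forms the alternating sum of the unit steps
`relu (m - k) - relu (m - (k + 1)) = [k < m]`, which is `∑_{k < m} (-1)^k = m mod 2`. -/

open Finset

section Parity

variable {R : Type*} [Ring R]

lemma natCast_sub_sub_natCast_sub_succ (m k : ℕ) :
    ((m - k : ℕ) : R) - ((m - (k + 1) : ℕ) : R) = if k < m then 1 else 0 := by
  split_ifs with h
  · rw [Nat.cast_sub h.le, Nat.cast_sub h, Nat.cast_add_one]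
    abel
  · rw [Nat.sub_eq_zero_of_le (not_lt.mp h), Nat.sub_eq_zero_of_le (by omega), sub_self]

lemma natCast_mod_two_eq_sum_range_neg_one_pow (m : ℕ) :
    ((m % 2 : ℕ) : R) = ∑ k ∈ range m, (-1) ^ k := by
  rw [neg_one_geom_sum]
  rcases Nat.even_or_odd m with h | h
  · simp [h, Nat.even_iff.mp h]
  · simp [Nat.odd_iff.mp h, Nat.not_even_iff_odd.mpr h]

lemma natCast_mod_two_eq_sum_range_neg_one_pow_mul_step {m d : ℕ} (hm : m ≤ d) :
    ((m % 2 : ℕ) : R)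
      = ∑ k ∈ range d, (-1) ^ k * (((m - k : ℕ) : R) - ((m - (k + 1) : ℕ) : R)) := by
  obtain ⟨r, rfl⟩ := Nat.exists_eq_add_of_le hm
  simp only [natCast_sub_sub_natCast_sub_succ, mul_ite, mul_one, mul_zero, sum_range_add,
    natCast_mod_two_eq_sum_range_neg_one_pow]
  rw [sum_congr rfl fun k hk => if_pos (mem_range.mp hk)]
  simp

end Parity

lemma relu_natCast_sub_natCast (m k : ℕ) : relu ((m : ℝ) - k) = ((m - k : ℕ) : ℝ) := by
  rcases le_total k m with h | h
  · rw [Nat.cast_sub h, relu, max_eq_right (sub_nonneg.mpr (by exact_mod_cast h))]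
  · rw [Nat.sub_eq_zero_of_le h, relu, max_eq_left (sub_nonpos.mpr (by exact_mod_cast h)),
      Nat.cast_zero]

lemma relu_boolIndicator_add_sub_one (a b : Bool) :
    relu ((if a then 1 else 0) + (if b then 1 else 0) - 1) = if a && b then 1 else 0 := by
  cases a <;> cases b <;> norm_num [relu]

lemma boolIndicator_add_tsub_one (a b : Bool) :
    (if a then 1 else 0) + (if b then 1 else 0) - 1 = if a && b then 1 else 0 := by
  cases a <;> cases b <;> rfl

def andCount {ι : Type*} [Fintype ι] (x y : ι → Bool) : ℕ := #{i | x i && y i}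

lemma sum_boolIndicator_add_tsub_one {ι : Type*} [Fintype ι] (x y : ι → Bool) :
    ∑ i, ((if x i then 1 else 0) + (if y i then 1 else 0) - 1) = andCount x y := by
  simp only [boolIndicator_add_tsub_one, andCount, card_filter]

lemma andCount_le {d : ℕ} (x y : Fin d → Bool) : andCount x y ≤ d :=
  (card_filter_le _ _).trans (card_fin d).le

lemma IPn_eq_andCount_mod_two {d : ℕ} (x y : Fin d → Bool) : IPn d x y = andCount x y % 2 := by
  rw [IPn, andCount, card_filter]
  congr 1
  refine sum_congr rfl fun i _ => ?_
  cases x i <;> cases y i <;> rfl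

lemma sum_fin_append_mul_fin_append {m n : ℕ} (a u : Fin m → ℝ) (b v : Fin n → ℝ) :
    ∑ j, Fin.append a b j * Fin.append u v j = ∑ i, a i * u i + ∑ i, b i * v i := by
  simp only [Fin.sum_univ_add, Fin.append_left, Fin.append_right]

def ipNet (d : ℕ) : Net (d + d) 1 :=
  .layer (fun i => Fin.append (Pi.single i 1) (Pi.single i 1)) (fun _ => -1)
    (.layer (fun _ _ => 1)
      (Fin.append (fun k : Fin d => -((k : ℕ) : ℝ)) (fun k : Fin d => -((k + 1 : ℕ) : ℝ)))
      (.last (fun _ => Fin.append (fun k : Fin d => (-1) ^ (k : ℕ)) (fun k => -(-1) ^ (k : ℕ)))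
        (fun _ => 0)))

lemma ipNet_depth (d : ℕ) : (ipNet d).depth = 3 := rfl

lemma ipNet_size (d : ℕ) : (ipNet d).size = 3 * d + 1 := by
  simp only [ipNet, Net.size]
  ring

lemma ipNet_eval {d : ℕ} (x y : Fin d → Bool) :
    (ipNet d).eval relu
        (Fin.append (fun i => if x i then 1 else 0) (fun i => if y i then 1 else 0)) 0
      = ∑ k ∈ range d, (-1) ^ k *
          (((andCount x y - k : ℕ) : ℝ) - ((andCount x y - (k + 1) : ℕ) : ℝ)) := by
  have hidden : ∀ i, relu ((∑ j, Fin.append (Pi.single i 1) (Pi.single i 1) j *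
      Fin.append (fun i => if x i then 1 else 0) (fun i => if y i then 1 else 0) j) + -1)
        = if x i && y i then 1 else 0 := fun i => by
    rw [sum_fin_append_mul_fin_append, ← dotProduct, ← dotProduct, single_dotProduct,
      single_dotProduct, one_mul, one_mul, ← sub_eq_add_neg, relu_boolIndicator_add_sub_one]
  have hcount : ∑ i, (if x i && y i then (1 : ℝ) else 0) = andCount x y := by
    rw [sum_boole, andCount]
  simp only [ipNet, Net.eval, hidden, one_mul, hcount]
  simp only [add_zero, Fin.sum_univ_add, Fin.append_left, Fin.append_right, ← sub_eq_add_neg,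
    relu_natCast_sub_natCast]
  rw [Fin.sum_univ_eq_sum_range (fun k => (-1) ^ k * ((andCount x y - k : ℕ) : ℝ)),
    Fin.sum_univ_eq_sum_range (fun k => -(-1) ^ k * ((andCount x y - (k + 1) : ℕ) : ℝ)),
    ← sum_add_distrib]
  refine sum_congr rfl fun k _ => ?_
  ring

/-- for all `x, y ∈ {0,1}^d`, writing `s = Σ_i max(0, x_i + y_i − 1)`,
`IP_d(x,y) = Σ_{k=1}^d (−1)^{k−1}·(max(0, s−k+1) − max(0, s−k))` (below the sum is
reindexed by `k ∈ {0,…,d−1}`); in particular `IP_d` is computed exactly on Boolean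
inputs by a ReLU network of depth `3` and size at most `3d + 1`. -/
theorem ip_relu_formula_and_net (d : ℕ) :
    (∀ x y : Fin d → Bool,
      ((IPn d x y : ℝ))
        = ∑ k ∈ Finset.range d,
            (-1 : ℝ) ^ k *
              (max 0 ((∑ i, max 0 ((if x i then 1 else 0) + (if y i then 1 else 0) - 1)) - k)
               - max 0 ((∑ i, max 0 ((if x i then 1 else 0) + (if y i then 1 else 0) - 1))
                   - (k + 1)))) ∧
    ∃ N : Net (d + d) 1, N.depth = 3 ∧ N.size ≤ 3 * d + 1 ∧
      ∀ x y : Fin d → Bool,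
        N.eval relu (Fin.append (fun i => if x i then 1 else 0)
          (fun i => if y i then 1 else 0)) 0 = (IPn d x y : ℝ) := by
  refine ⟨fun x y => ?_, ipNet d, ipNet_depth d, (ipNet_size d).le, fun x y => ?_⟩
  · simp only [Nat.zero_max, sum_boolIndicator_add_tsub_one]
    rw [IPn_eq_andCount_mod_two,
      natCast_mod_two_eq_sum_range_neg_one_pow_mul_step (andCount_le x y)]
  · rw [ipNet_eval, IPn_eq_andCount_mod_two,
      natCast_mod_two_eq_sum_range_neg_one_pow_mul_step (andCount_le x y)]
end
end
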